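/- arXiv:2209.05721 — 2 statements merged into one kernel-verified Lean document; each statement's English description precedes it below -/
import Mathlib

section
/- For p ∈ (1, ∞), the function Q_p(q) := 2 E_{1,p}(q)/K_{1,p}(q) - 1 is strictly decreasing on [0, 1), satisfies Q_p(0) = 1, and its limit as q ↑ 1 equals -1 if 1 < p ≤ 2 and equals -1/(p-1) if p > 2. -/
/-!
Write `a = 1 - 2 / p > -1`. `E1 p` and `K1 p` integrate `√(1 - q² sin² θ)` and its reciprocal
against the weight `cos θ ^ a`, so `E1 p` decreases and `K1 p` increases in `q`, and they agree at
`q = 0`. As `q ↑ 1` the integrands tend to `cos θ ^ (a + 1)` and `cos θ ^ (a - 1)`. The first is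
dominated by `cos θ ^ a`. For `a > 0` so is the second, by `cos θ ^ (a - 1)`, and the limit ratio
`a / (a + 1)` comes from `(a + 1) ∫ cos ^ (a + 1) = a ∫ cos ^ (a - 1)`, obtained by differentiating
`cos θ ^ a * sin θ`. For `a ≤ 0` we have `cos θ ^ a ≥ 1` and
`√(1 - q² sin² θ) ≤ π / 2 - θ + δ` with `δ = √(1 - q²)`, so `K1 p q ≥ log ((π / 2 + δ) / δ) → ∞`.
-/

open Real Filter

/-- The complete `p`-elliptic integral of the first kind. -/
noncomputable def K1 (p q : ℝ) : ℝ :=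
  ∫ θ in (0:ℝ)..(π / 2), Real.cos θ ^ (1 - 2 / p) / Real.sqrt (1 - q ^ 2 * Real.sin θ ^ 2)

/-- The complete `p`-elliptic integral of the second kind. -/
noncomputable def E1 (p q : ℝ) : ℝ :=
  ∫ θ in (0:ℝ)..(π / 2), Real.sqrt (1 - q ^ 2 * Real.sin θ ^ 2) * Real.cos θ ^ (1 - 2 / p)

/-- The ratio function `Q_p`. -/
noncomputable def Qp (p q : ℝ) : ℝ := 2 * E1 p q / K1 p q - 1

open MeasureTheory Set intervalIntegral
open scoped Interval Topology

lemma ae_restrict_uIoc_mem_Ioo {a b : ℝ} (hab : a ≤ b) :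
    ∀ᵐ x ∂volume.restrict (Ι a b), x ∈ Ioo a b := by
  rw [uIoc_of_le hab, ae_restrict_iff' measurableSet_Ioc]
  filter_upwards [Measure.ae_ne volume b] with x hxb hx
  exact ⟨hx.1, lt_of_le_of_ne hx.2 hxb⟩

lemma integral_lt_integral_of_lt_on_Ioo {f g : ℝ → ℝ} {a b : ℝ} (hab : a < b)
    (hf : IntervalIntegrable f volume a b) (hg : IntervalIntegrable g volume a b)
    (h : ∀ x ∈ Ioo a b, f x < g x) : ∫ x in a..b, f x < ∫ x in a..b, g x := by
  have := intervalIntegral_pos_of_pos_on (hg.sub hf) (fun x hx => sub_pos.2 (h x hx)) hab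
  rwa [integral_sub hg hf, sub_pos] at this

lemma StrictAntiOn.div_strictMonoOn {α : Type*} [Preorder α] {f g : α → ℝ} {s : Set α}
    (hf : StrictAntiOn f s) (hg : StrictMonoOn g s) (hf₀ : ∀ x ∈ s, 0 ≤ f x)
    (hg₀ : ∀ x ∈ s, 0 < g x) : StrictAntiOn (fun x => f x / g x) s :=
  fun _ hx _ hy hxy => div_lt_div₀ (hf hx hy hxy) (hg hx hy hxy).le (hf₀ _ hx) (hg₀ _ hx)

lemma integral_inv_add_sub {b δ : ℝ} (hb : 0 ≤ b) (hδ : 0 < δ) :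
    ∫ θ in (0:ℝ)..b, (b + δ - θ)⁻¹ = log ((b + δ) / δ) := by
  rw [integral_comp_sub_left (fun x => x⁻¹), integral_inv] <;>
    simp only [sub_zero, add_sub_cancel_left]
  rw [uIcc_of_le (by linarith)]
  exact fun h => hδ.not_ge h.1

lemma tendsto_log_add_div_nhdsGT_zero {b : ℝ} (hb : 0 < b) :
    Tendsto (fun δ => log ((b + δ) / δ)) (𝓝[>] 0) atTop := by
  refine tendsto_log_atTop.comp <| tendsto_atTop_mono' _ ?_
    (tendsto_inv_nhdsGT_zero.const_mul_atTop hb)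
  filter_upwards [self_mem_nhdsWithin] with δ (hδ : 0 < δ)
  rw [← div_eq_mul_inv]
  exact div_le_div_of_nonneg_right (by linarith) hδ.le

lemma tendsto_sqrt_one_sub_sq_nhdsLT_one :
    Tendsto (fun q : ℝ => √(1 - q ^ 2)) (𝓝[<] 1) (𝓝[>] 0) := by
  refine tendsto_nhdsWithin_iff.2 ⟨?_, ?_⟩
  · simpa using ((by fun_prop : Continuous fun q : ℝ => √(1 - q ^ 2)).tendsto 1).mono_left
      nhdsWithin_le_nhds
  · filter_upwards [Ioo_mem_nhdsLT (zero_lt_one' ℝ)] with q hq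
    exact sqrt_pos.2 (by nlinarith [hq.1, hq.2])

lemma cos_pos_of_mem_Ioo_zero {θ : ℝ} (hθ : θ ∈ Ioo 0 (π / 2)) : 0 < cos θ :=
  cos_pos_of_mem_Ioo ⟨by linarith [hθ.1, pi_pos], hθ.2⟩

lemma cos_le_sqrt_one_sub_sq_mul_sin_sq {q : ℝ} (hq : q ^ 2 ≤ 1) (θ : ℝ) :
    cos θ ≤ √(1 - q ^ 2 * sin θ ^ 2) :=
  (le_abs_self _).trans <| abs_le_sqrt <| by nlinarith [sin_sq_add_cos_sq θ, sq_nonneg (sin θ)]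

lemma sqrt_one_sub_sq_mul_sin_sq_le_one (q θ : ℝ) : √(1 - q ^ 2 * sin θ ^ 2) ≤ 1 :=
  sqrt_le_one.2 <| by nlinarith [sq_nonneg (q * sin θ)]

lemma sqrt_one_sub_sq_mul_sin_sq_lt {q₁ q₂ θ : ℝ} (hq₁ : 0 ≤ q₁) (hq : q₁ < q₂) (hq₂ : q₂ ≤ 1)
    (hθ : sin θ ≠ 0) : √(1 - q₂ ^ 2 * sin θ ^ 2) < √(1 - q₁ ^ 2 * sin θ ^ 2) := by
  have hsq : q₁ ^ 2 < q₂ ^ 2 := by gcongr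
  have hsin : 0 < sin θ ^ 2 := by positivity
  apply sqrt_lt_sqrt
  · nlinarith [sin_sq_le_one θ]
  · nlinarith

lemma sqrt_one_sub_one_pow_mul_sin_sq {θ : ℝ} (hθ : θ ∈ Icc 0 (π / 2)) :
    √(1 - 1 ^ 2 * sin θ ^ 2) = cos θ := by
  rw [one_pow, one_mul, ← cos_eq_sqrt_one_sub_sin_sq (by linarith [hθ.1, pi_pos]) hθ.2]

section

variable {a : ℝ}

lemma intervalIntegrable_cos_rpow (ha : -1 < a) :
    IntervalIntegrable (fun θ => cos θ ^ a) volume 0 (π / 2) := by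
  rcases le_or_gt 0 a with ha0 | ha0
  · exact (continuous_cos.rpow_const fun _ => Or.inr ha0).intervalIntegrable _ _
  have hdom : IntervalIntegrable (fun θ => (2 / π) ^ a * (π / 2 - θ) ^ a) volume 0 (π / 2) := by
    have := (intervalIntegrable_rpow' ha (a := π / 2) (b := 0)).comp_sub_left (π / 2)
    simpa using this.const_mul ((2 / π) ^ a)
  refine hdom.mono_fun' (measurable_cos.pow_const a).aestronglyMeasurable ?_
  filter_upwards [ae_restrict_uIoc_mem_Ioo (by positivity)] with θ ⟨h0, h1⟩
  have hlin : 0 < 2 / π * (π / 2 - θ) := mul_pos (by positivity) (by linarith)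
  have hcos : 2 / π * (π / 2 - θ) ≤ cos θ := by
    rw [← sin_pi_div_two_sub]; exact mul_le_sin (by linarith) (by linarith)
  rw [norm_of_nonneg (rpow_nonneg (hlin.le.trans hcos) a),
    ← mul_rpow (by positivity) (by linarith)]
  exact rpow_le_rpow_of_nonpos hlin hcos ha0.le

lemma add_one_mul_integral_cos_rpow_add_one (ha : 0 < a) :
    (a + 1) * ∫ θ in (0:ℝ)..(π / 2), cos θ ^ (a + 1) =
      a * ∫ θ in (0:ℝ)..(π / 2), cos θ ^ (a - 1) := by
  have hint₁ := (intervalIntegrable_cos_rpow (a := a + 1) (by linarith)).const_mul (a + 1)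
  have hint₂ := (intervalIntegrable_cos_rpow (a := a - 1) (by linarith)).const_mul a
  have hderiv : ∀ θ ∈ Ioo 0 (π / 2), HasDerivWithinAt (fun θ => cos θ ^ a * sin θ)
      ((a + 1) * cos θ ^ (a + 1) - a * cos θ ^ (a - 1)) (Ioi θ) θ := by
    intro θ hθ
    have hcos := cos_pos_of_mem_Ioo_zero hθ
    refine (((hasDerivAt_cos θ).rpow_const (Or.inl hcos.ne')).mul
      (hasDerivAt_sin θ)).hasDerivWithinAt.congr_deriv ?_
    have h₁ : cos θ ^ a = cos θ ^ (a - 1) * cos θ := by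
      rw [← rpow_add_one hcos.ne', sub_add_cancel]
    have h₂ : cos θ ^ (a + 1) = cos θ ^ (a - 1) * cos θ * cos θ := by
      rw [rpow_add_one hcos.ne', h₁]
    rw [h₂, h₁]
    linear_combination (-(a * cos θ ^ (a - 1))) * sin_sq_add_cos_sq θ
  have hFTC := integral_eq_sub_of_hasDeriv_right_of_le (f := fun θ => cos θ ^ a * sin θ)
    (by positivity)
    ((continuous_cos.rpow_const fun _ => Or.inr ha.le).mul continuous_sin).continuousOn
    hderiv (hint₁.sub hint₂)
  rw [integral_sub hint₁ hint₂, intervalIntegral.integral_const_mul,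
    intervalIntegral.integral_const_mul, cos_pi_div_two, zero_rpow ha.ne'] at hFTC
  simpa [sub_eq_zero] using hFTC

noncomputable def weightedEllipticK (a q : ℝ) : ℝ :=
  ∫ θ in (0:ℝ)..(π / 2), cos θ ^ a / √(1 - q ^ 2 * sin θ ^ 2)

noncomputable def weightedEllipticE (a q : ℝ) : ℝ :=
  ∫ θ in (0:ℝ)..(π / 2), √(1 - q ^ 2 * sin θ ^ 2) * cos θ ^ a

lemma intervalIntegrable_weightedEllipticK_integrand (ha : -1 < a) {q : ℝ} (hq : q ^ 2 < 1) :
    IntervalIntegrable (fun θ => cos θ ^ a / √(1 - q ^ 2 * sin θ ^ 2)) volume 0 (π / 2) := by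
  refine (intervalIntegrable_cos_rpow ha).mul_continuousOn
    (g := fun θ => (√(1 - q ^ 2 * sin θ ^ 2))⁻¹) ?_
  refine (Continuous.continuousOn (by fun_prop)).inv₀ fun θ _ => (sqrt_pos.2 ?_).ne'
  nlinarith [sin_sq_le_one θ, sq_nonneg (sin θ)]

lemma intervalIntegrable_weightedEllipticE_integrand (ha : -1 < a) (q : ℝ) :
    IntervalIntegrable (fun θ => √(1 - q ^ 2 * sin θ ^ 2) * cos θ ^ a) volume 0 (π / 2) :=
  (intervalIntegrable_cos_rpow ha).continuousOn_mul (Continuous.continuousOn (by fun_prop))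

lemma weightedEllipticK_pos (ha : -1 < a) {q : ℝ} (hq : q ^ 2 < 1) : 0 < weightedEllipticK a q :=
  intervalIntegral_pos_of_pos_on (intervalIntegrable_weightedEllipticK_integrand ha hq)
    (fun θ hθ => div_pos (rpow_pos_of_pos (cos_pos_of_mem_Ioo_zero hθ) a)
      ((cos_pos_of_mem_Ioo_zero hθ).trans_le (cos_le_sqrt_one_sub_sq_mul_sin_sq hq.le θ)))
    (by positivity)

lemma weightedEllipticE_pos (ha : -1 < a) {q : ℝ} (hq : q ^ 2 ≤ 1) : 0 < weightedEllipticE a q :=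
  intervalIntegral_pos_of_pos_on (intervalIntegrable_weightedEllipticE_integrand ha q)
    (fun θ hθ => mul_pos
      ((cos_pos_of_mem_Ioo_zero hθ).trans_le (cos_le_sqrt_one_sub_sq_mul_sin_sq hq θ))
      (rpow_pos_of_pos (cos_pos_of_mem_Ioo_zero hθ) a))
    (by positivity)

lemma weightedEllipticE_zero_eq_weightedEllipticK_zero :
    weightedEllipticE a 0 = weightedEllipticK a 0 := by
  simp [weightedEllipticK, weightedEllipticE]

lemma strictMonoOn_weightedEllipticK (ha : -1 < a) :
    StrictMonoOn (weightedEllipticK a) (Ico 0 1) := by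
  intro q₁ hq₁ q₂ hq₂ hq
  have hq₂_sq : q₂ ^ 2 < 1 := by nlinarith [hq₂.1, hq₂.2]
  refine integral_lt_integral_of_lt_on_Ioo (by positivity)
    (intervalIntegrable_weightedEllipticK_integrand ha (by nlinarith [hq₁.1, hq₁.2]))
    (intervalIntegrable_weightedEllipticK_integrand ha hq₂_sq) fun θ hθ => ?_
  have hcos := cos_pos_of_mem_Ioo_zero hθ
  have hsin : sin θ ≠ 0 := (sin_pos_of_pos_of_lt_pi hθ.1 (by linarith [hθ.2, pi_pos])).ne'
  exact div_lt_div_of_pos_left (rpow_pos_of_pos hcos a)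
    (hcos.trans_le (cos_le_sqrt_one_sub_sq_mul_sin_sq hq₂_sq.le θ))
    (sqrt_one_sub_sq_mul_sin_sq_lt hq₁.1 hq hq₂.2.le hsin)

lemma strictAntiOn_weightedEllipticE (ha : -1 < a) :
    StrictAntiOn (weightedEllipticE a) (Icc 0 1) := by
  intro q₁ hq₁ q₂ hq₂ hq
  refine integral_lt_integral_of_lt_on_Ioo (by positivity)
    (intervalIntegrable_weightedEllipticE_integrand ha q₂)
    (intervalIntegrable_weightedEllipticE_integrand ha q₁) fun θ hθ => ?_
  have hsin : sin θ ≠ 0 := (sin_pos_of_pos_of_lt_pi hθ.1 (by linarith [hθ.2, pi_pos])).ne'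
  exact mul_lt_mul_of_pos_right (sqrt_one_sub_sq_mul_sin_sq_lt hq₁.1 hq hq₂.2 hsin)
    (rpow_pos_of_pos (cos_pos_of_mem_Ioo_zero hθ) a)

lemma continuous_weightedEllipticE (ha : -1 < a) : Continuous (weightedEllipticE a) := by
  refine continuous_of_dominated_interval (bound := fun θ => cos θ ^ a)
    (fun q => (intervalIntegrable_weightedEllipticE_integrand ha q).def'.aestronglyMeasurable)
    (fun q => ?_) (intervalIntegrable_cos_rpow ha) (ae_of_all _ fun θ _ => by fun_prop)
  rw [← ae_restrict_iff' measurableSet_uIoc]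
  filter_upwards [ae_restrict_uIoc_mem_Ioo (by positivity)] with θ hθ
  have hcos := (rpow_pos_of_pos (cos_pos_of_mem_Ioo_zero hθ) a).le
  rw [norm_of_nonneg (mul_nonneg (sqrt_nonneg _) hcos)]
  exact mul_le_of_le_one_left hcos (sqrt_one_sub_sq_mul_sin_sq_le_one q θ)

lemma weightedEllipticE_one (ha : -1 < a) :
    weightedEllipticE a 1 = ∫ θ in (0:ℝ)..(π / 2), cos θ ^ (a + 1) := by
  refine integral_congr fun θ hθ => ?_
  rw [uIcc_of_le (by positivity)] at hθ
  have hcos : 0 ≤ cos θ := cos_nonneg_of_mem_Icc ⟨by linarith [hθ.1, pi_pos], hθ.2⟩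
  rw [sqrt_one_sub_one_pow_mul_sin_sq hθ, rpow_add_one' hcos (by linarith), mul_comm]

lemma tendsto_weightedEllipticE (ha : -1 < a) :
    Tendsto (weightedEllipticE a) (𝓝[<] 1) (𝓝 (∫ θ in (0:ℝ)..(π / 2), cos θ ^ (a + 1))) := by
  rw [← weightedEllipticE_one ha]
  exact (continuous_weightedEllipticE ha).continuousWithinAt.tendsto

lemma tendsto_weightedEllipticK_of_pos (ha : 0 < a) :
    Tendsto (weightedEllipticK a) (𝓝[<] 1) (𝓝 (∫ θ in (0:ℝ)..(π / 2), cos θ ^ (a - 1))) := by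
  refine tendsto_integral_filter_of_dominated_convergence (fun θ => cos θ ^ (a - 1))
    (Eventually.of_forall fun q => (by fun_prop :
      Measurable fun θ => cos θ ^ a / √(1 - q ^ 2 * sin θ ^ 2)).aestronglyMeasurable) ?_
    (intervalIntegrable_cos_rpow (by linarith)) ?_
  · filter_upwards [Ioo_mem_nhdsLT (zero_lt_one' ℝ)] with q hq
    rw [← ae_restrict_iff' measurableSet_uIoc]
    filter_upwards [ae_restrict_uIoc_mem_Ioo (by positivity)] with θ hθ
    have hcos := cos_pos_of_mem_Ioo_zero hθ
    have hsqrt := cos_le_sqrt_one_sub_sq_mul_sin_sq (q := q) (by nlinarith [hq.1, hq.2]) θ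
    rw [norm_of_nonneg (div_nonneg (rpow_pos_of_pos hcos a).le (sqrt_nonneg _)),
      rpow_sub_one hcos.ne']
    exact div_le_div_of_nonneg_left (rpow_pos_of_pos hcos a).le hcos hsqrt
  · rw [← ae_restrict_iff' measurableSet_uIoc]
    filter_upwards [ae_restrict_uIoc_mem_Ioo (by positivity)] with θ hθ
    have hcos := cos_pos_of_mem_Ioo_zero hθ
    have hsqrt : Tendsto (fun q : ℝ => √(1 - q ^ 2 * sin θ ^ 2)) (𝓝[<] 1) (𝓝 (cos θ)) := by
      rw [← sqrt_one_sub_one_pow_mul_sin_sq (Ioo_subset_Icc_self hθ)]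
      exact (Continuous.tendsto (by fun_prop) 1).mono_left nhdsWithin_le_nhds
    rw [rpow_sub_one hcos.ne']
    exact tendsto_const_nhds.div hsqrt hcos.ne'

lemma log_le_weightedEllipticK (ha : a ≤ 0) (ha' : -1 < a) {q : ℝ} (hq : q ^ 2 < 1) :
    log ((π / 2 + √(1 - q ^ 2)) / √(1 - q ^ 2)) ≤ weightedEllipticK a q := by
  have hδ : 0 < √(1 - q ^ 2) := sqrt_pos.2 (by linarith)
  rw [← integral_inv_add_sub (by positivity) hδ]
  refine integral_mono_on_of_le_Ioo (by positivity) ?_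
    (intervalIntegrable_weightedEllipticK_integrand ha' hq) fun θ hθ => ?_
  · refine (Continuous.continuousOn (by fun_prop)).inv₀ ?_ |>.intervalIntegrable
    intro x hx
    rw [uIcc_of_le (by positivity)] at hx
    linarith [hx.2]
  have hcos := cos_pos_of_mem_Ioo_zero hθ
  have hcos_le : cos θ ≤ π / 2 - θ := by
    rw [← sin_pi_div_two_sub]; exact sin_le (by linarith [hθ.2])
  -- `1 - q² sin² θ = cos² θ + (1 - q²) sin² θ ≤ (cos θ + √(1 - q²))²`
  have hsqrt : √(1 - q ^ 2 * sin θ ^ 2) ≤ cos θ + √(1 - q ^ 2) := by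
    rw [sqrt_le_left (by positivity)]
    nlinarith [sin_sq_add_cos_sq θ, sq_sqrt (show 0 ≤ 1 - q ^ 2 by linarith), sq_nonneg (sin θ),
      sin_sq_le_one θ, mul_pos hcos hδ]
  have hpos : 0 < √(1 - q ^ 2 * sin θ ^ 2) :=
    hcos.trans_le (cos_le_sqrt_one_sub_sq_mul_sin_sq hq.le θ)
  calc (π / 2 + √(1 - q ^ 2) - θ)⁻¹ ≤ (√(1 - q ^ 2 * sin θ ^ 2))⁻¹ :=
        inv_anti₀ hpos (by linarith)
    _ ≤ cos θ ^ a / √(1 - q ^ 2 * sin θ ^ 2) := by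
        rw [inv_eq_one_div]
        exact div_le_div_of_nonneg_right
          (one_le_rpow_of_pos_of_le_one_of_nonpos hcos (cos_le_one θ) ha) hpos.le

lemma tendsto_weightedEllipticK_atTop (ha : a ≤ 0) (ha' : -1 < a) :
    Tendsto (weightedEllipticK a) (𝓝[<] 1) atTop := by
  refine tendsto_atTop_mono' _ ?_
    ((tendsto_log_add_div_nhdsGT_zero pi_div_two_pos).comp tendsto_sqrt_one_sub_sq_nhdsLT_one)
  filter_upwards [Ioo_mem_nhdsLT (zero_lt_one' ℝ)] with q hq
  exact log_le_weightedEllipticK ha ha' (by nlinarith [hq.1, hq.2])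

lemma tendsto_weightedEllipticE_div_weightedEllipticK_of_nonpos (ha : a ≤ 0) (ha' : -1 < a) :
    Tendsto (fun q => weightedEllipticE a q / weightedEllipticK a q) (𝓝[<] 1) (𝓝 0) :=
  (tendsto_weightedEllipticE ha').div_atTop (tendsto_weightedEllipticK_atTop ha ha')

lemma tendsto_weightedEllipticE_div_weightedEllipticK_of_pos (ha : 0 < a) :
    Tendsto (fun q => weightedEllipticE a q / weightedEllipticK a q) (𝓝[<] 1)
      (𝓝 (a / (a + 1))) := by
  have hI : 0 < ∫ θ in (0:ℝ)..(π / 2), cos θ ^ (a - 1) :=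
    intervalIntegral_pos_of_pos_on (intervalIntegrable_cos_rpow (by linarith))
      (fun θ hθ => rpow_pos_of_pos (cos_pos_of_mem_Ioo_zero hθ) _) (by positivity)
  have hlim := (tendsto_weightedEllipticE (a := a) (by linarith)).div
    (tendsto_weightedEllipticK_of_pos ha) hI.ne'
  have hval : (∫ θ in (0:ℝ)..(π / 2), cos θ ^ (a + 1)) /
      (∫ θ in (0:ℝ)..(π / 2), cos θ ^ (a - 1)) = a / (a + 1) :=
    (div_eq_div_iff hI.ne' (by linarith)).2
      (by linear_combination add_one_mul_integral_cos_rpow_add_one ha)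
  rwa [hval] at hlim

end

theorem Qp_strictAnti_and_limits (p : ℝ) (hp : 1 < p) :
    StrictAntiOn (Qp p) (Set.Ico (0:ℝ) 1) ∧ Qp p 0 = 1 ∧
    (p ≤ 2 → Tendsto (Qp p) (nhdsWithin 1 (Set.Iio 1)) (nhds (-1))) ∧
    (2 < p → Tendsto (Qp p) (nhdsWithin 1 (Set.Iio 1)) (nhds (-(1 / (p - 1))))) := by
  have hp₀ : 0 < p := by linarith
  have ha : -1 < 1 - 2 / p := by
    have : 2 / p < 2 := (div_lt_iff₀ hp₀).2 (by linarith)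
    linarith
  have hQ : Qp p = fun q =>
      2 * (weightedEllipticE (1 - 2 / p) q / weightedEllipticK (1 - 2 / p) q) - 1 := by
    ext q
    rw [Qp, mul_div_assoc]
    rfl
  have hq_sq : ∀ q ∈ Ico (0:ℝ) 1, q ^ 2 < 1 := fun q hq => by nlinarith [hq.1, hq.2]
  rw [hQ]
  refine ⟨fun q₁ hq₁ q₂ hq₂ hq => ?_, ?_, fun hp₂ => ?_, fun hp₂ => ?_⟩
  · have := ((strictAntiOn_weightedEllipticE ha).mono Ico_subset_Icc_self).div_strictMonoOn
      (strictMonoOn_weightedEllipticK ha)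
      (fun q hq => (weightedEllipticE_pos ha (hq_sq q hq).le).le)
      (fun q hq => weightedEllipticK_pos ha (hq_sq q hq)) hq₁ hq₂ hq
    dsimp only
    linarith
  · dsimp only
    rw [weightedEllipticE_zero_eq_weightedEllipticK_zero,
      div_self (weightedEllipticK_pos ha (by norm_num)).ne']
    norm_num
  · have ha₀ : 1 - 2 / p ≤ 0 := by rw [sub_nonpos, le_div_iff₀ hp₀]; linarith
    simpa using
      ((tendsto_weightedEllipticE_div_weightedEllipticK_of_nonpos ha₀ ha).const_mul 2).sub_const 1
  · have ha₀ : 0 < 1 - 2 / p := by rw [sub_pos, div_lt_one hp₀]; exact hp₂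
    convert ((tendsto_weightedEllipticE_div_weightedEllipticK_of_pos ha₀).const_mul 2).sub_const 1
      using 2
    rw [show 1 - 2 / p + 1 = 2 * (p - 1) / p by field_simp; ring]
    field_simp [show p - 1 ≠ 0 by linarith]
    ring
end

section
/- For each p ∈ (1, ∞), there exists a unique q* ∈ (0, 1) such that 2E_{1,p}(q*) = K_{1,p}(q*); moreover 1/√2 < q* < 1. -/
open Real

/-!
Write `s = 1 - 2/p ∈ (-1, 1)` and `Δ² = 1 - q² sin² θ`, so that
`2E - K = ∫ cos^s θ · φ(Δ²)` with `φ(w) = 2√w - 1/√w`. Since `φ` is increasing and `Δ²`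
decreases in `q`, `2E - K` is strictly decreasing in `q`, which gives uniqueness.
At `q = 1/√2` we have `Δ² > 1/2`, so `φ(Δ²) > 0`. Near `q = 1` the gap is negative:
for `s > 0` its value at `q = 1` is `2 W(s+1) - W(s-1) = (s-1)/(s+1) · W(s-1) < 0` by the
recursion for `W(s) = ∫ cos^s θ`, and for `s ≤ 0` the `K`-part blows up logarithmically
while the `E`-part stays below `2 W(s)`. Continuity in `q` (dominated convergence) and the
intermediate value theorem then give the root.
-/

open MeasureTheory Set

namespace PElliptic

lemma cos_pos_of_mem_Ioo_zero_pi_div_two {θ : ℝ} (hθ : θ ∈ Ioo 0 (π / 2)) : 0 < cos θ :=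
  cos_pos_of_mem_Ioo ⟨by linarith [hθ.1, pi_pos], hθ.2⟩

lemma cos_rpow_le_of_nonpos {s θ : ℝ} (hs : s ≤ 0) (h0 : 0 ≤ θ) (h1 : θ ≤ π / 2) :
    cos θ ^ s ≤ (2 / π) ^ s * (π / 2 - θ) ^ s := by
  rw [← mul_rpow (by positivity) (by linarith)]
  rcases h1.lt_or_eq with h1 | rfl
  · refine rpow_le_rpow_of_nonpos (by have := pi_pos; positivity) ?_ hs
    simpa [sin_pi_div_two_sub] using mul_le_sin (x := π / 2 - θ) (by linarith) (by linarith)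
  · simp

lemma intervalIntegrable_cos_rpow {s : ℝ} (hs : -1 < s) :
    IntervalIntegrable (fun θ => cos θ ^ s) volume 0 (π / 2) := by
  rcases le_total 0 s with hs0 | hs0
  · exact ((continuous_rpow_const hs0).comp continuous_cos).intervalIntegrable _ _
  have hbound :
      IntervalIntegrable (fun θ => (2 / π) ^ s * (π / 2 - θ) ^ s) volume 0 (π / 2) := by
    have := intervalIntegral.intervalIntegrable_rpow' (a := 0) (b := π / 2) hs
    simpa using ((this.comp_sub_left (π / 2)).const_mul ((2 / π) ^ s)).symm
  refine hbound.mono_fun' (continuous_cos.measurable.pow_const s).aestronglyMeasurable ?_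
  rw [uIoc_of_le (by positivity)]
  refine ae_restrict_of_forall_mem measurableSet_Ioc fun θ hθ => ?_
  dsimp only
  rw [norm_of_nonneg (rpow_nonneg (cos_nonneg_of_mem_Icc ⟨by linarith [hθ.1, pi_pos], hθ.2⟩) _)]
  exact cos_rpow_le_of_nonpos hs0 hθ.1.le hθ.2

noncomputable def wallisIntegral (s : ℝ) : ℝ := ∫ θ in (0:ℝ)..(π / 2), cos θ ^ s

lemma wallisIntegral_pos {s : ℝ} (hs : -1 < s) : 0 < wallisIntegral s :=
  intervalIntegral.intervalIntegral_pos_of_pos_on (intervalIntegrable_cos_rpow hs)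
    (fun θ hθ => rpow_pos_of_pos (cos_pos_of_mem_Ioo_zero_pi_div_two hθ) s)
    (by positivity)

lemma hasDerivAt_sin_mul_cos_rpow {s θ : ℝ} (hc : 0 < cos θ) :
    HasDerivAt (fun θ => sin θ * cos θ ^ s)
      ((s + 1) * cos θ ^ (s + 1) - s * cos θ ^ (s - 1)) θ := by
  refine ((hasDerivAt_sin θ).mul
    ((hasDerivAt_cos θ).rpow_const (p := s) (Or.inl hc.ne'))).congr_deriv ?_
  rw [rpow_add_one hc.ne', rpow_sub_one hc.ne']
  field_simp
  linear_combination (-s) * sin_sq_add_cos_sq θ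

lemma wallisIntegral_add_one {s : ℝ} (hs : 0 < s) :
    (s + 1) * wallisIntegral (s + 1) = s * wallisIntegral (s - 1) := by
  have hint : ∀ c t : ℝ, -1 < t → IntervalIntegrable (fun θ => c * cos θ ^ t) volume 0 (π / 2) :=
    fun c t ht => (intervalIntegrable_cos_rpow ht).const_mul c
  have hftc := intervalIntegral.integral_eq_sub_of_hasDeriv_right_of_le
    (f := fun θ => sin θ * cos θ ^ s) (by positivity) (by fun_prop (disch := exact hs.le))
    (fun θ hθ => (hasDerivAt_sin_mul_cos_rpow (s := s)
      (cos_pos_of_mem_Ioo_zero_pi_div_two hθ)).hasDerivWithinAt)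
    ((hint (s + 1) (s + 1) (by linarith)).sub (hint s (s - 1) (by linarith)))
  rw [intervalIntegral.integral_sub (hint _ _ (by linarith)) (hint _ _ (by linarith)),
    intervalIntegral.integral_const_mul, intervalIntegral.integral_const_mul, cos_pi_div_two,
    zero_rpow hs.ne', sin_zero] at hftc
  simp only [mul_zero, zero_mul, sub_zero] at hftc
  exact sub_eq_zero.1 hftc

noncomputable def deltaSq (q θ : ℝ) : ℝ := 1 - q ^ 2 * sin θ ^ 2

lemma deltaSq_le_one (q θ : ℝ) : deltaSq q θ ≤ 1 := by
  unfold deltaSq; nlinarith [sq_nonneg (q * sin θ)]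

lemma one_sub_sq_le_deltaSq (q θ : ℝ) : 1 - q ^ 2 ≤ deltaSq q θ := by
  unfold deltaSq; nlinarith [sin_sq_le_one θ, sq_nonneg q]

lemma deltaSq_eq_cos_sq_add (q θ : ℝ) : deltaSq q θ = cos θ ^ 2 + (1 - q ^ 2) * sin θ ^ 2 := by
  unfold deltaSq; linear_combination (-1) * sin_sq_add_cos_sq θ

lemma cos_sq_le_deltaSq {q : ℝ} (hq : q ^ 2 ≤ 1) (θ : ℝ) : cos θ ^ 2 ≤ deltaSq q θ := by
  rw [deltaSq_eq_cos_sq_add]; nlinarith [sq_nonneg (sin θ)]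

lemma deltaSq_pos {q θ : ℝ} (hq : q ^ 2 ≤ 1) (hθ : θ ∈ Ioo 0 (π / 2)) : 0 < deltaSq q θ :=
  (pow_pos (cos_pos_of_mem_Ioo_zero_pi_div_two hθ) 2).trans_le
    (cos_sq_le_deltaSq hq θ)

lemma deltaSq_lt_deltaSq {q₁ q₂ θ : ℝ} (hq₁ : 0 ≤ q₁) (hq : q₁ < q₂) (hθ : 0 < sin θ) :
    deltaSq q₂ θ < deltaSq q₁ θ := by
  have := mul_lt_mul_of_pos_right (pow_lt_pow_left₀ hq hq₁ two_ne_zero) (pow_pos hθ 2)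
  unfold deltaSq; linarith

lemma deltaSq_le_deltaSq {q₁ q₂ : ℝ} (hq₁ : 0 ≤ q₁) (hq : q₁ ≤ q₂) (θ : ℝ) :
    deltaSq q₂ θ ≤ deltaSq q₁ θ := by
  have := mul_le_mul_of_nonneg_right (pow_le_pow_left₀ hq₁ hq 2) (sq_nonneg (sin θ))
  unfold deltaSq; linarith

noncomputable def gapFactor (w : ℝ) : ℝ := 2 * √w - (√w)⁻¹

lemma gapFactor_pos {w : ℝ} (hw : 1 / 2 < w) : 0 < gapFactor w := by
  have hsw : 0 < √w := sqrt_pos.2 (by linarith)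
  rw [gapFactor, sub_pos, inv_lt_iff_one_lt_mul₀ hsw, mul_assoc, mul_self_sqrt (by linarith)]
  linarith

lemma gapFactor_strictMonoOn : StrictMonoOn gapFactor (Ioi 0) := by
  intro w₁ hw₁ w₂ _ hw
  have hs := sqrt_lt_sqrt (le_of_lt hw₁) hw
  have := inv_strictAnti₀ (sqrt_pos.2 hw₁) hs
  unfold gapFactor; linarith

lemma continuousOn_gapFactor : ContinuousOn gapFactor (Ioi 0) := by
  unfold gapFactor
  exact ContinuousOn.sub (by fun_prop)
    (continuous_sqrt.continuousOn.inv₀ fun w hw => (sqrt_pos.2 hw).ne')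

lemma abs_gapFactor_le {w : ℝ} (hw : w ≤ 1) : |gapFactor w| ≤ 2 + (√w)⁻¹ := by
  have h1 : √w ≤ 1 := sqrt_le_one.2 hw
  have h2 : 0 ≤ (√w)⁻¹ := by positivity
  rw [gapFactor, abs_le]; constructor <;> nlinarith [sqrt_nonneg w]

noncomputable def ellipticGap (s q : ℝ) : ℝ :=
  ∫ θ in (0:ℝ)..(π / 2), cos θ ^ s * gapFactor (deltaSq q θ)

lemma continuous_deltaSq (q : ℝ) : Continuous (deltaSq q) := by
  unfold deltaSq; fun_prop

lemma continuous_inv_sqrt_deltaSq {q : ℝ} (hq : q ^ 2 < 1) :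
    Continuous fun θ => (√(deltaSq q θ))⁻¹ :=
  (continuous_deltaSq q).sqrt.inv₀ fun θ =>
    (sqrt_pos.2 ((sub_pos.2 hq).trans_le (one_sub_sq_le_deltaSq q θ))).ne'

lemma intervalIntegrable_cos_rpow_mul_inv_sqrt_deltaSq {s q : ℝ} (hs : -1 < s) (hq : q ^ 2 < 1) :
    IntervalIntegrable (fun θ => cos θ ^ s * (√(deltaSq q θ))⁻¹) volume 0 (π / 2) :=
  (intervalIntegrable_cos_rpow hs).mul_continuousOn (continuous_inv_sqrt_deltaSq hq).continuousOn

lemma intervalIntegrable_ellipticGap_integrand {s q : ℝ} (hs : -1 < s) (hq : q ^ 2 < 1) :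
    IntervalIntegrable (fun θ => cos θ ^ s * gapFactor (deltaSq q θ)) volume 0 (π / 2) :=
  (intervalIntegrable_cos_rpow hs).mul_continuousOn
    (((continuous_deltaSq q).sqrt.const_mul 2).sub (continuous_inv_sqrt_deltaSq hq)).continuousOn

lemma two_mul_E1_sub_K1 {p q : ℝ} (hs : -1 < 1 - 2 / p) (hq : q ^ 2 < 1) :
    2 * E1 p q - K1 p q = ellipticGap (1 - 2 / p) q := by
  have hE := (intervalIntegrable_cos_rpow hs).continuousOn_mul
    (continuous_deltaSq q).sqrt.continuousOn
  have hK := intervalIntegrable_cos_rpow_mul_inv_sqrt_deltaSq hs hq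
  rw [ellipticGap, intervalIntegral.integral_congr (g := fun θ =>
    2 * (√(deltaSq q θ) * cos θ ^ (1 - 2 / p)) - cos θ ^ (1 - 2 / p) * (√(deltaSq q θ))⁻¹)
    fun θ _ => by simp only [gapFactor]; ring]
  rw [intervalIntegral.integral_sub (hE.const_mul 2) hK, intervalIntegral.integral_const_mul]
  rfl

lemma inv_sqrt_two_sq : (1 / √2 : ℝ) ^ 2 = 1 / 2 := by
  rw [div_pow, one_pow, sq_sqrt zero_le_two]

lemma ellipticGap_inv_sqrt_two_pos {s : ℝ} (hs : -1 < s) : 0 < ellipticGap s (1 / √2) := by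
  refine intervalIntegral.intervalIntegral_pos_of_pos_on
    (intervalIntegrable_ellipticGap_integrand hs (by rw [inv_sqrt_two_sq]; norm_num))
    (fun θ hθ => ?_) (by positivity)
  have hc := cos_pos_of_mem_Ioo_zero_pi_div_two hθ
  refine mul_pos (rpow_pos_of_pos hc s) (gapFactor_pos ?_)
  rw [deltaSq_eq_cos_sq_add, inv_sqrt_two_sq]
  nlinarith [sin_sq_add_cos_sq θ, pow_pos hc 2]

lemma ellipticGap_strictAntiOn {s : ℝ} (hs : -1 < s) : StrictAntiOn (ellipticGap s) (Ico 0 1) := by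
  intro q₁ hq₁ q₂ hq₂ hq
  have hsq : ∀ q ∈ Ico (0:ℝ) 1, q ^ 2 < 1 := fun q hq => by nlinarith [hq.1, hq.2]
  rw [← sub_pos, ellipticGap, ellipticGap, ← intervalIntegral.integral_sub
    (intervalIntegrable_ellipticGap_integrand hs (hsq _ hq₁))
    (intervalIntegrable_ellipticGap_integrand hs (hsq _ hq₂))]
  refine intervalIntegral.intervalIntegral_pos_of_pos_on
    ((intervalIntegrable_ellipticGap_integrand hs (hsq _ hq₁)).sub
      (intervalIntegrable_ellipticGap_integrand hs (hsq _ hq₂))) (fun θ hθ => ?_) (by positivity)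
  have hc := cos_pos_of_mem_Ioo_zero_pi_div_two hθ
  have hsin := sin_pos_of_pos_of_lt_pi hθ.1 (by linarith [hθ.2, pi_pos])
  rw [sub_pos]
  exact mul_lt_mul_of_pos_left (gapFactor_strictMonoOn (deltaSq_pos (hsq _ hq₂).le hθ)
    (deltaSq_pos (hsq _ hq₁).le hθ) (deltaSq_lt_deltaSq hq₁.1 hq hsin)) (rpow_pos_of_pos hc s)

lemma ae_imp_of_forall_Ioo {a b : ℝ} (hab : a ≤ b) {P : ℝ → Prop} (h : ∀ x ∈ Ioo a b, P x) :
    ∀ᵐ x ∂volume, x ∈ uIoc a b → P x := by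
  filter_upwards [Measure.ae_ne volume b] with x hxb hx
  rw [uIoc_of_le hab] at hx
  exact h x ⟨hx.1, hx.2.lt_of_ne hxb⟩

lemma continuousOn_ellipticGap {s b : ℝ} (hs : -1 < s) (hb : b ≤ 1)
    (hK : IntervalIntegrable (fun θ => cos θ ^ s * (√(deltaSq b θ))⁻¹) volume 0 (π / 2)) :
    ContinuousOn (ellipticGap s) (Icc 0 b) := by
  intro q₀ hq₀
  have hsq : ∀ q ∈ Icc 0 b, q ^ 2 ≤ 1 := fun q hq => by nlinarith [hq.1, hq.2]
  refine intervalIntegral.continuousWithinAt_of_dominated_interval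
    (bound := fun θ => 2 * cos θ ^ s + cos θ ^ s * (√(deltaSq b θ))⁻¹)
    (Filter.Eventually.of_forall fun q => Measurable.aestronglyMeasurable ?_) ?_
    (((intervalIntegrable_cos_rpow hs).const_mul 2).add hK)
    (ae_imp_of_forall_Ioo (by positivity) ?_)
  · unfold gapFactor deltaSq; fun_prop
  · filter_upwards [self_mem_nhdsWithin] with q hq
    refine ae_imp_of_forall_Ioo (by positivity) fun θ hθ => ?_
    have hcs := rpow_pos_of_pos (cos_pos_of_mem_Ioo_zero_pi_div_two hθ) s
    have hwb := deltaSq_pos (hsq b ⟨hq.1.trans hq.2, le_rfl⟩) hθ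
    have hinv : (√(deltaSq q θ))⁻¹ ≤ (√(deltaSq b θ))⁻¹ :=
      inv_anti₀ (sqrt_pos.2 hwb) (sqrt_le_sqrt (deltaSq_le_deltaSq hq.1 hq.2 θ))
    rw [norm_mul, norm_of_nonneg hcs.le, norm_eq_abs]
    nlinarith [abs_gapFactor_le (deltaSq_le_one q θ)]
  · intro θ hθ
    have hw := deltaSq_pos (hsq q₀ hq₀) hθ
    have hcont : ContinuousAt (fun q => gapFactor (deltaSq q θ)) q₀ :=
      (continuousOn_gapFactor.continuousAt (Ioi_mem_nhds hw)).comp (f := fun q => deltaSq q θ)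
        (by unfold deltaSq; fun_prop)
    exact (continuousAt_const.mul hcont).continuousWithinAt

lemma sqrt_deltaSq_one {θ : ℝ} (hθ : θ ∈ Ioo 0 (π / 2)) : √(deltaSq 1 θ) = cos θ := by
  rw [deltaSq_eq_cos_sq_add, one_pow, sub_self, zero_mul, add_zero,
    sqrt_sq (cos_pos_of_mem_Ioo_zero_pi_div_two hθ).le]

lemma intervalIntegrable_cos_rpow_mul_inv_sqrt_deltaSq_one {s : ℝ} (hs : 0 < s) :
    IntervalIntegrable (fun θ => cos θ ^ s * (√(deltaSq 1 θ))⁻¹) volume 0 (π / 2) := by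
  refine (intervalIntegrable_cos_rpow (s := s - 1) (by linarith)).congr_uIoo fun θ hθ => ?_
  rw [uIoo_of_le (by positivity)] at hθ
  dsimp only
  rw [sqrt_deltaSq_one hθ, rpow_sub_one (cos_pos_of_mem_Ioo_zero_pi_div_two hθ).ne',
    div_eq_mul_inv]

lemma ellipticGap_one {s : ℝ} (hs : 0 < s) :
    ellipticGap s 1 = 2 * wallisIntegral (s + 1) - wallisIntegral (s - 1) := by
  rw [ellipticGap, intervalIntegral.integral_congr_Ioo_of_le (by positivity)
    (g := fun θ => 2 * cos θ ^ (s + 1) - cos θ ^ (s - 1)) fun θ hθ => ?_,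
    intervalIntegral.integral_sub (((intervalIntegrable_cos_rpow (by linarith)).const_mul 2))
      (intervalIntegrable_cos_rpow (by linarith)), intervalIntegral.integral_const_mul]
  · rfl
  have hc := (cos_pos_of_mem_Ioo_zero_pi_div_two hθ).ne'
  simp only [gapFactor, sqrt_deltaSq_one hθ, rpow_add_one hc, rpow_sub_one hc]
  field_simp

lemma ellipticGap_one_neg {s : ℝ} (hs : 0 < s) (hs1 : s < 1) : ellipticGap s 1 < 0 := by
  have h : (s + 1) * ellipticGap s 1 = (s - 1) * wallisIntegral (s - 1) := by
    rw [ellipticGap_one hs]; linear_combination 2 * wallisIntegral_add_one hs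
  have := mul_neg_of_neg_of_pos (sub_neg.2 hs1) (wallisIntegral_pos (s := s - 1) (by linarith))
  nlinarith

lemma sqrt_deltaSq_le {q δ θ : ℝ} (hqδ : q ^ 2 + δ ^ 2 = 1) (hδ : 0 ≤ δ) (hc : 0 ≤ cos θ) :
    √(deltaSq q θ) ≤ cos θ + δ := by
  refine sqrt_le_iff.2 ⟨by positivity, ?_⟩
  rw [deltaSq_eq_cos_sq_add, show 1 - q ^ 2 = δ ^ 2 by linarith]
  nlinarith [sin_sq_le_one θ, mul_nonneg hc hδ, sq_nonneg δ]

lemma integral_inv_add_pi_div_two_sub {δ : ℝ} (hδ : 0 < δ) :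
    ∫ θ in (0:ℝ)..(π / 2), (δ + π / 2 - θ)⁻¹ = log ((δ + π / 2) / δ) := by
  rw [intervalIntegral.integral_comp_sub_left (fun x => x⁻¹), add_sub_cancel_right, sub_zero,
    integral_inv_of_pos hδ (by positivity)]

/-- For `s ≤ 0` the `K`-integrand dominates `1 / (δ + π/2 - θ)`, whose integral diverges as
`δ → 0`. -/
lemma ellipticGap_le_of_nonpos {s q δ : ℝ} (hs : -1 < s) (hs0 : s ≤ 0) (hδ : 0 < δ)
    (hqδ : q ^ 2 + δ ^ 2 = 1) :
    ellipticGap s q ≤ 2 * wallisIntegral s - log ((δ + π / 2) / δ) := by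
  have hq : q ^ 2 < 1 := by nlinarith
  have hint : IntervalIntegrable (fun θ => (δ + π / 2 - θ)⁻¹) volume 0 (π / 2) := by
    refine ContinuousOn.intervalIntegrable (ContinuousOn.inv₀ (by fun_prop) fun θ hθ => ?_)
    rw [uIcc_of_le (by positivity)] at hθ
    exact (by linarith [hθ.2] : 0 < δ + π / 2 - θ).ne'
  rw [← integral_inv_add_pi_div_two_sub hδ, wallisIntegral, ← intervalIntegral.integral_const_mul,
    ← intervalIntegral.integral_sub ((intervalIntegrable_cos_rpow hs).const_mul 2) hint]
  refine intervalIntegral.integral_mono_on_of_le_Ioo (by positivity)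
    (intervalIntegrable_ellipticGap_integrand hs hq)
    (((intervalIntegrable_cos_rpow hs).const_mul 2).sub hint) fun θ hθ => ?_
  have hc := cos_pos_of_mem_Ioo_zero_pi_div_two hθ
  have hcs : 1 ≤ cos θ ^ s := one_le_rpow_of_pos_of_le_one_of_nonpos hc (cos_le_one θ) hs0
  have hw := sqrt_pos.2 (deltaSq_pos hq.le hθ)
  have hw1 : √(deltaSq q θ) ≤ 1 := sqrt_le_one.2 (deltaSq_le_one q θ)
  have hcos : cos θ ≤ π / 2 - θ := by
    simpa [sin_pi_div_two_sub] using sin_le (x := π / 2 - θ) (by linarith [hθ.2])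
  have hinv : (δ + π / 2 - θ)⁻¹ ≤ (√(deltaSq q θ))⁻¹ :=
    inv_anti₀ hw (by linarith [sqrt_deltaSq_le hqδ hδ.le hc.le])
  have := le_mul_of_one_le_left (inv_nonneg.2 hw.le) hcs
  simp only [gapFactor]
  nlinarith

lemma exists_ellipticGap_neg_of_nonpos {s : ℝ} (hs : -1 < s) (hs0 : s ≤ 0) :
    ∃ b ∈ Ioo (1 / √2) 1, ellipticGap s b < 0 := by
  -- chosen so that `(δ + π/2) / δ = exp (2 W(s)) + π + 1`
  set δ := π / 2 / (exp (2 * wallisIntegral s) + π)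
  have hexp := exp_pos (2 * wallisIntegral s)
  have hδ : 0 < δ := by positivity
  have hδ2 : δ < 1 / 2 := by
    rw [div_lt_iff₀ (by positivity)]; nlinarith [pi_pos]
  have hqδ : √(1 - δ ^ 2) ^ 2 + δ ^ 2 = 1 := by rw [sq_sqrt (by nlinarith)]; ring
  refine ⟨√(1 - δ ^ 2), ⟨?_, ?_⟩, (ellipticGap_le_of_nonpos hs hs0 hδ hqδ).trans_lt ?_⟩
  · rw [one_div, ← sqrt_inv]; exact sqrt_lt_sqrt (by norm_num) (by nlinarith)
  · rw [sqrt_lt' one_pos]; nlinarith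
  · have : (δ + π / 2) / δ = exp (2 * wallisIntegral s) + π + 1 := by
      unfold δ; field_simp; ring
    rw [sub_neg, this, lt_log_iff_exp_lt (by positivity)]
    linarith [pi_pos]

lemma exists_ellipticGap_eq_zero {s : ℝ} (hs : -1 < s) (hs1 : s < 1) :
    ∃ q ∈ Ioo (1 / √2) 1, ellipticGap s q = 0 := by
  obtain ⟨b, ⟨hab, hb1⟩, hb, hcont⟩ : ∃ b ∈ Ioc (1 / √2) 1,
      ellipticGap s b < 0 ∧ ContinuousOn (ellipticGap s) (Icc 0 b) := by
    rcases le_or_gt s 0 with hs0 | hs0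
    · obtain ⟨b, hb, hgap⟩ := exists_ellipticGap_neg_of_nonpos hs hs0
      have hb2 : b ^ 2 < 1 := by nlinarith [(by positivity : (0:ℝ) < 1 / √2).trans hb.1, hb.2]
      exact ⟨b, Ioo_subset_Ioc_self hb, hgap, continuousOn_ellipticGap hs hb.2.le
        (intervalIntegrable_cos_rpow_mul_inv_sqrt_deltaSq hs hb2)⟩
    · refine ⟨1, ⟨?_, le_rfl⟩, ellipticGap_one_neg hs0 hs1, continuousOn_ellipticGap hs le_rfl
        (intervalIntegrable_cos_rpow_mul_inv_sqrt_deltaSq_one hs0)⟩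
      rw [div_lt_one (by positivity), lt_sqrt zero_le_one]; norm_num
  obtain ⟨q, hq, hq0⟩ := intermediate_value_Ioo' hab.le
    (hcont.mono (Icc_subset_Icc (by positivity) le_rfl)) ⟨hb, ellipticGap_inv_sqrt_two_pos hs⟩
  exact ⟨q, ⟨hq.1, hq.2.trans_le hb1⟩, hq0⟩

end PElliptic

open PElliptic in
theorem exists_unique_qstar (p : ℝ) (hp : 1 < p) :
    ∃ q ∈ Set.Ioo (0:ℝ) 1,
      (2 * E1 p q = K1 p q ∧ 1 / Real.sqrt 2 < q) ∧
      ∀ q' ∈ Set.Ioo (0:ℝ) 1, 2 * E1 p q' = K1 p q' → q' = q := by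
  have h2p : 0 < 2 / p ∧ 2 / p < 2 := ⟨by positivity, by rw [div_lt_iff₀ (by linarith)]; linarith⟩
  have hs : -1 < 1 - 2 / p := by linarith
  have hgap : ∀ q ∈ Ioo (0:ℝ) 1, 2 * E1 p q = K1 p q ↔ ellipticGap (1 - 2 / p) q = 0 :=
    fun q hq => by rw [← two_mul_E1_sub_K1 hs (by nlinarith [hq.1, hq.2]), sub_eq_zero]
  obtain ⟨q, ⟨hq, hq1⟩, hq0⟩ := exists_ellipticGap_eq_zero hs (by linarith)
  have hq_mem : q ∈ Ioo (0:ℝ) 1 := ⟨(by positivity : (0:ℝ) < 1 / √2).trans hq, hq1⟩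
  refine ⟨q, hq_mem, ⟨(hgap q hq_mem).2 hq0, hq⟩, fun q' hq' h => ?_⟩
  exact (ellipticGap_strictAntiOn hs).injOn ⟨hq'.1.le, hq'.2⟩ ⟨hq_mem.1.le, hq1⟩
    (((hgap q' hq').1 h).trans hq0.symm)
end
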